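/- arXiv:1506.01869 — 5 statements merged into one kernel-verified Lean document; each statement's English description precedes it below -/
import Mathlib

section
/- Let k, m ∈ ℝ with k ≠ 0, let a : ℝ → ℝ be differentiable, nonnegative, and nondecreasing, and let χ : ℝ → ℂ be twice differentiable with χ''(η) + (k² + m²·a(η)²)·χ(η) = 0 for all η ∈ ℝ. Then the function η ↦ Q(η)/(k² + m²·a(η)²), where Q(η) := |χ'(η)|² + (k² + m²·a(η)²)·|χ(η)|², is nonincreasing; indeed its derivative equals −2·m²·a(η)·a'(η)·|χ'(η)|²/(k² + m²·a(η)²)². -/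
/-!
For `f'' = -ω² f` the energy `Q = ‖f'‖² + ω² ‖f‖²` changes only through the frequency:
`Q' = (ω²)' ‖f‖²`. Hence `(Q / ω²)' = ((ω²)' ‖f‖² ω² - Q (ω²)') / ω⁴ = -(ω²)' ‖f'‖² / ω⁴`,
which is `≤ 0` as soon as `ω² = k² + m² a²` is nondecreasing, i.e. when `a ≥ 0` and `a' ≥ 0`.
-/

open scoped RealInnerProductSpace

section Oscillator

variable {E : Type*} [NormedAddCommGroup E] [InnerProductSpace ℝ E]
  {f f' : ℝ → E} {w : ℝ → ℝ} {w' t : ℝ}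

theorem hasDerivAt_oscillator_energy (hf : HasDerivAt f (f' t) t)
    (hf' : HasDerivAt f' (-w t • f t) t) (hw : HasDerivAt w w' t) :
    HasDerivAt (fun s => ‖f' s‖ ^ 2 + w s * ‖f s‖ ^ 2) (w' * ‖f t‖ ^ 2) t := by
  refine (hf'.norm_sq.add (hw.mul hf.norm_sq)).congr_deriv ?_
  rw [inner_smul_right, real_inner_comm (f t)]
  ring

theorem hasDerivAt_oscillator_energy_div (hf : HasDerivAt f (f' t) t)
    (hf' : HasDerivAt f' (-w t • f t) t) (hw : HasDerivAt w w' t) (hw0 : w t ≠ 0) :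
    HasDerivAt (fun s => (‖f' s‖ ^ 2 + w s * ‖f s‖ ^ 2) / w s)
      (-(w' * ‖f' t‖ ^ 2) / w t ^ 2) t := by
  refine ((hasDerivAt_oscillator_energy hf hf' hw).div hw hw0).congr_deriv ?_
  field_simp
  ring

end Oscillator

/-- For a mode `χ` solving `χ'' + (k² + m²a²)χ = 0` with `k ≠ 0` and `a` nonnegative
and nondecreasing, the quantity `Q/(k² + m²a²)` is nonincreasing, with derivative
`-2 m² a a' |χ'|²/(k² + m²a²)²`. -/
theorem stmt_4 (k m : ℝ) (hk : k ≠ 0) (a : ℝ → ℝ) (χ : ℝ → ℂ)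
    (ha : Differentiable ℝ a) (hapos : ∀ t, 0 ≤ a t) (hamono : Monotone a)
    (hχ : Differentiable ℝ χ) (hχ' : Differentiable ℝ (deriv χ))
    (heq : ∀ η : ℝ, deriv (deriv χ) η = -((k ^ 2 + m ^ 2 * a η ^ 2 : ℝ) : ℂ) * χ η) :
    let Q : ℝ → ℝ := fun η =>
      ‖deriv χ η‖ ^ 2 + (k ^ 2 + m ^ 2 * a η ^ 2) * ‖χ η‖ ^ 2
    let R : ℝ → ℝ := fun η => Q η / (k ^ 2 + m ^ 2 * a η ^ 2)
    Antitone R ∧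
    (∀ η : ℝ, HasDerivAt R
      (-(2 * m ^ 2 * a η * deriv a η * ‖deriv χ η‖ ^ 2) /
        (k ^ 2 + m ^ 2 * a η ^ 2) ^ 2) η) := by
  intro Q R
  have hω : ∀ η, HasDerivAt (fun t => k ^ 2 + m ^ 2 * a t ^ 2) (2 * m ^ 2 * a η * deriv a η) η :=
    fun η => ((((ha η).hasDerivAt.pow 2).const_mul (m ^ 2)).const_add (k ^ 2)).congr_deriv
      (by ring)
  have hmode : ∀ η, HasDerivAt (deriv χ) (-(k ^ 2 + m ^ 2 * a η ^ 2) • χ η) η := fun η => by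
    rw [Complex.real_smul, Complex.ofReal_neg, ← heq]
    exact (hχ' η).hasDerivAt
  have hR : ∀ η, HasDerivAt R
      (-(2 * m ^ 2 * a η * deriv a η * ‖deriv χ η‖ ^ 2) / (k ^ 2 + m ^ 2 * a η ^ 2) ^ 2) η :=
    fun η => hasDerivAt_oscillator_energy_div (hχ η).hasDerivAt (hmode η) (hω η) (by positivity)
  refine ⟨antitone_of_hasDerivAt_nonpos hR fun η => ?_, hR⟩
  have := hapos η
  have := hamono.deriv_nonneg (x := η)
  exact div_nonpos_of_nonpos_of_nonneg (neg_nonpos.mpr (by positivity)) (by positivity)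
end

section
/- Let k, m ∈ ℝ with k ≠ 0, let a : ℝ → ℝ be differentiable, nonnegative, and nondecreasing, and let χ : ℝ → ℂ be twice differentiable with χ''(η) + (k² + m²·a(η)²)·χ(η) = 0 for all η ∈ ℝ. Set Q(η) := |χ'(η)|² + (k² + m²·a(η)²)·|χ(η)|². Then for all η₁ ≤ η₂: ((k² + m²·a(η₁)²)/(k² + m²·a(η₂)²))·Q(η₂) ≤ Q(η₁) ≤ Q(η₂). (With the normalisation a(η₂) = 1 this is the paper's bound ((k² + a²m²)/(k² + m²))·Q(a=1) ≤ Q(a) ≤ Q(a=1), which implies that the energy density per mode Q/a⁴ scales between a⁻² and a⁻⁴ in an expanding universe.) -/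
/-!
Along a solution of `u'' = -ω u` the energy `Q = ‖u'‖² + ω ‖u‖²` satisfies `Q' = ω' ‖u‖²`,
since the cross terms `2⟪u', u''⟫` and `2ω⟪u, u'⟫` cancel. Hence `Q` grows when `ω` does, while
`(Q / ω)' = -ω' ‖u'‖² / ω² ≤ 0`. For `ω = k² + m²a²` with `a ≥ 0` nondecreasing, the two
monotonicity statements between `η₁ ≤ η₂` are the two sides of the bound.
-/

noncomputable def oscillatorEnergy (ω : ℝ → ℝ) (u : ℝ → ℂ) (t : ℝ) : ℝ :=
  ‖deriv u t‖ ^ 2 + ω t * ‖u t‖ ^ 2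

section Oscillator

variable {ω : ℝ → ℝ} {u : ℝ → ℂ}

theorem hasDerivAt_oscillatorEnergy {ω' t : ℝ} (hω : HasDerivAt ω ω' t)
    (hu : DifferentiableAt ℝ u t) (hu' : DifferentiableAt ℝ (deriv u) t)
    (heq : deriv (deriv u) t = -(ω t : ℂ) * u t) :
    HasDerivAt (oscillatorEnergy ω u) (ω' * ‖u t‖ ^ 2) t := by
  refine (hu'.hasDerivAt.norm_sq.add (hω.mul hu.hasDerivAt.norm_sq)).congr_deriv ?_
  have hsmul : -(ω t : ℂ) * u t = (-ω t) • u t := by simp [Complex.real_smul]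
  rw [heq, hsmul, real_inner_smul_right, real_inner_comm]
  ring

variable (hω : Differentiable ℝ ω) (hω_mono : Monotone ω)
  (hu : Differentiable ℝ u) (hu' : Differentiable ℝ (deriv u))
  (heq : ∀ t, deriv (deriv u) t = -(ω t : ℂ) * u t)
include hω hω_mono hu hu' heq

theorem oscillatorEnergy_monotone : Monotone (oscillatorEnergy ω u) := by
  have hQ t := hasDerivAt_oscillatorEnergy (hω t).hasDerivAt (hu t) (hu' t) (heq t)
  refine monotone_of_deriv_nonneg (fun t => (hQ t).differentiableAt) fun t => ?_
  rw [(hQ t).deriv]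
  have := hω_mono.deriv_nonneg (x := t)
  positivity

theorem oscillatorEnergy_div_antitone (hω_pos : ∀ t, 0 < ω t) :
    Antitone (oscillatorEnergy ω u / ω) := by
  have hR t := (hasDerivAt_oscillatorEnergy (hω t).hasDerivAt (hu t) (hu' t) (heq t)).div
    (hω t).hasDerivAt (hω_pos t).ne'
  refine antitone_of_deriv_nonpos (fun t => (hR t).differentiableAt) fun t => ?_
  rw [(hR t).deriv]
  have hnum : deriv ω t * ‖u t‖ ^ 2 * ω t - oscillatorEnergy ω u t * deriv ω t
      = -(deriv ω t * ‖deriv u t‖ ^ 2) := by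
    unfold oscillatorEnergy; ring
  have := hω_mono.deriv_nonneg (x := t)
  rw [hnum, neg_div]
  exact neg_nonpos.mpr (by positivity)

end Oscillator

/-- Two-sided scaling bound for the per-mode energy density: for `η₁ ≤ η₂`,
`((k² + m²a(η₁)²)/(k² + m²a(η₂)²)) Q(η₂) ≤ Q(η₁) ≤ Q(η₂)`. -/
theorem stmt_5 (k m : ℝ) (hk : k ≠ 0) (a : ℝ → ℝ) (χ : ℝ → ℂ)
    (ha : Differentiable ℝ a) (hapos : ∀ t, 0 ≤ a t) (hamono : Monotone a)
    (hχ : Differentiable ℝ χ) (hχ' : Differentiable ℝ (deriv χ))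
    (heq : ∀ η : ℝ, deriv (deriv χ) η = -((k ^ 2 + m ^ 2 * a η ^ 2 : ℝ) : ℂ) * χ η) :
    let Q : ℝ → ℝ := fun η =>
      ‖deriv χ η‖ ^ 2 + (k ^ 2 + m ^ 2 * a η ^ 2) * ‖χ η‖ ^ 2
    ∀ η₁ η₂ : ℝ, η₁ ≤ η₂ →
      ((k ^ 2 + m ^ 2 * a η₁ ^ 2) / (k ^ 2 + m ^ 2 * a η₂ ^ 2)) * Q η₂ ≤ Q η₁ ∧
      Q η₁ ≤ Q η₂ := by
  intro Q η₁ η₂ h12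
  set ω : ℝ → ℝ := fun η => k ^ 2 + m ^ 2 * a η ^ 2
  have hω_pos t : 0 < ω t := by positivity
  have hω_mono : Monotone ω := fun s t hst => by
    have := pow_le_pow_left₀ (hapos s) (hamono hst) 2
    simp only [ω]
    gcongr
  have hω : Differentiable ℝ ω := by fun_prop
  change ω η₁ / ω η₂ * oscillatorEnergy ω χ η₂ ≤ oscillatorEnergy ω χ η₁ ∧
    oscillatorEnergy ω χ η₁ ≤ oscillatorEnergy ω χ η₂
  refine ⟨?_, oscillatorEnergy_monotone hω hω_mono hχ hχ' heq h12⟩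
  calc ω η₁ / ω η₂ * oscillatorEnergy ω χ η₂
      = ω η₁ * (oscillatorEnergy ω χ η₂ / ω η₂) := by ring
    _ ≤ ω η₁ * (oscillatorEnergy ω χ η₁ / ω η₁) := mul_le_mul_of_nonneg_left
        (oscillatorEnergy_div_antitone hω hω_mono hχ hχ' heq hω_pos h12) (hω_pos η₁).le
    _ = oscillatorEnergy ω χ η₁ := mul_div_cancel₀ _ (hω_pos η₁).ne'
end

section
/- Let a : ℝ → ℝ be differentiable with nonincreasing derivative (deriv a is antitone), and suppose that at some time t₁ one has a(t₁) > 0 and a'(t₁) > 0. Then a(t) ≤ a(t₁) + a'(t₁)·(t − t₁) for all t ≤ t₁, and consequently a(t) < 0 for every t < t₁ − a(t₁)/a'(t₁). In particular, any interval containing t₁ on which a is strictly positive is bounded below by t₁ − a(t₁)/a'(t₁), so a must vanish at some finite time t₀ > −∞ in the past if it is extended as a continuous nonnegative function. -/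
/-- Big Bang singularity theorem: if `a` is differentiable with nonincreasing derivative
and `a(t₁) > 0`, `a'(t₁) > 0`, then `a` is bounded above by its tangent line in the past,
is negative before `t₁ - a(t₁)/a'(t₁)`, and any set containing `t₁` on which `a` is
positive is bounded below by `t₁ - a(t₁)/a'(t₁)`. -/
theorem stmt_13 (a : ℝ → ℝ) (ha : Differentiable ℝ a)
    (hanti : Antitone (deriv a)) (t₁ : ℝ) (h1 : 0 < a t₁) (h2 : 0 < deriv a t₁) :
    (∀ t ≤ t₁, a t ≤ a t₁ + deriv a t₁ * (t - t₁)) ∧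
    (∀ t, t < t₁ - a t₁ / deriv a t₁ → a t < 0) ∧
    (∀ I : Set ℝ, t₁ ∈ I → (∀ t ∈ I, 0 < a t) → ∀ t ∈ I, t₁ - a t₁ / deriv a t₁ ≤ t) := by
  have key : ∀ t ≤ t₁, a t ≤ a t₁ + deriv a t₁ * (t - t₁) := by
    intro t ht
    set g : ℝ → ℝ := fun s => a t₁ + deriv a t₁ * (s - t₁) - a s with hg
    have hgd : Differentiable ℝ g := by
      apply Differentiable.sub _ ha
      apply Differentiable.const_add
      exact (differentiable_id.sub_const t₁).const_mul _
    have hgderiv : ∀ s, deriv g s = deriv a t₁ - deriv a s := by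
      intro s
      have : HasDerivAt g (deriv a t₁ * 1 - deriv a s) s := by
        exact (((hasDerivAt_id s).sub_const t₁).const_mul (deriv a t₁)).const_add (a t₁)
          |>.sub (ha s).hasDerivAt
      simpa using this.deriv
    have hmono : AntitoneOn g (Set.Iic t₁) := by
      apply antitoneOn_of_deriv_nonpos (convex_Iic t₁) hgd.continuous.continuousOn
        (fun s _ => (hgd s).differentiableWithinAt)
      intro s hs
      rw [hgderiv]
      have : deriv a t₁ ≤ deriv a s := hanti (le_of_lt (by simpa using hs))
      linarith
    have := hmono (Set.mem_Iic.mpr ht) (Set.mem_Iic.mpr le_rfl) ht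
    simp [hg] at this
    linarith
  refine ⟨key, ?_, ?_⟩
  · intro t ht
    have ht' : t ≤ t₁ := by
      have : 0 < a t₁ / deriv a t₁ := div_pos h1 h2
      linarith
    have h := key t ht'
    have : deriv a t₁ * (t - t₁) < -a t₁ := by
      have : t - t₁ < -(a t₁ / deriv a t₁) := by linarith
      calc deriv a t₁ * (t - t₁) < deriv a t₁ * (-(a t₁ / deriv a t₁)) := by
            exact mul_lt_mul_of_pos_left this h2
        _ = -a t₁ := by field_simp
    linarith
  · intro I ht₁ hpos t htI
    by_contra hcon
    push_neg at hcon
    have := hpos t htI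
    have neg : a t < 0 := by
      -- reuse second part reasoning
      have ht' : t ≤ t₁ := by
        have : 0 < a t₁ / deriv a t₁ := div_pos h1 h2
        linarith
      have h := key t ht'
      have : deriv a t₁ * (t - t₁) < -a t₁ := by
        have : t - t₁ < -(a t₁ / deriv a t₁) := by linarith
        calc deriv a t₁ * (t - t₁) < deriv a t₁ * (-(a t₁ / deriv a t₁)) := by
              exact mul_lt_mul_of_pos_left this h2
          _ = -a t₁ := by field_simp
      linarith
    linarith
end

section
/- Let c, d > 0 and define H(z) := c^{1/3}·d^{2/3}·(2c/d − 1 + (1+z)³)^{2/3} / 2^{2/3} for z ≥ 0 (the base 2c/d − 1 + (1+z)³ ≥ 2c/d > 0 is positive there, and indeed on a neighbourhood of 0). Define the cosmological-time derivatives of H as functions of z by Ḣ(z) := −(1+z)·H(z)·H'(z) and Ḧ(z) := −(1+z)·H(z)·(d/dz)Ḣ(z). Then H satisfies the initial conditions H(0) = c and H'(0) = d, and solves J₀₀ = 0 on [0,∞), i.e. 6·Ḣ(z)² − 12·Ḧ(z)·H(z) − 36·Ḣ(z)·H(z)² = 0 for all z ≥ 0. -/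
/-!
Write `u(z) = 2c/d - 1 + (1+z)³` and `s = u^{1/3}`, so that `H = K s²` with
`K = c^{1/3} d^{2/3} / 2^{2/3}` and `s' = (1+z)²/s²`. Then `Ḣ = -2K² (1+z)³ s` and
`Ḧ = 2K³ (1+z)³ (3s³ + (1+z)³)`, and the three terms of `J₀₀` cancel identically in `s`,
for every `K` and every value of the constant in `u`. The initial conditions fix `K` and
that constant.
-/

open Filter Topology

/-- The cosmological-time derivative `d/dt = -(1+z) H d/dz`, written in redshift. -/
noncomputable def timeDeriv (H f : ℝ → ℝ) (z : ℝ) : ℝ := -(1 + z) * H z * deriv f z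

noncomputable def curvatureJ00 (H : ℝ → ℝ) (z : ℝ) : ℝ :=
  6 * timeDeriv H H z ^ 2 - 12 * timeDeriv H (timeDeriv H H) z * H z
    - 36 * timeDeriv H H z * H z ^ 2

theorem Real.rpow_two_thirds {x : ℝ} (hx : 0 ≤ x) :
    x ^ (2 / 3 : ℝ) = (x ^ (1 / 3 : ℝ)) ^ 2 := by
  rw [← Real.rpow_natCast, ← Real.rpow_mul hx]
  norm_num

theorem HasDerivAt.rpow_one_third {u : ℝ → ℝ} {u' z : ℝ} (hu : HasDerivAt u u' z)
    (hpos : 0 < u z) :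
    HasDerivAt (fun w => u w ^ (1 / 3 : ℝ)) (u' / (3 * (u z ^ (1 / 3 : ℝ)) ^ 2)) z := by
  convert hu.rpow_const (p := 1 / 3) (Or.inl hpos.ne') using 1
  rw [← Real.rpow_two_thirds hpos.le, show (1 / 3 : ℝ) - 1 = -(2 / 3) by norm_num,
    Real.rpow_neg hpos.le]
  field_simp

section CubeRootSolution

variable {K z : ℝ} {s H : ℝ → ℝ}

theorem hasDerivAt_of_eventuallyEq_mul_sq (hH : ∀ᶠ w in 𝓝 z, H w = K * s w ^ 2)
    (hs : s z ≠ 0) (hs' : HasDerivAt s ((1 + z) ^ 2 / s z ^ 2) z) :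
    HasDerivAt H (2 * K * (1 + z) ^ 2 / s z) z := by
  refine (((hs'.fun_pow 2).const_mul K).congr_of_eventuallyEq hH).congr_deriv ?_
  norm_num
  field_simp

theorem timeDeriv_self_eventuallyEq (hH : ∀ᶠ w in 𝓝 z, H w = K * s w ^ 2)
    (hs : ∀ᶠ w in 𝓝 z, s w ≠ 0 ∧ HasDerivAt s ((1 + w) ^ 2 / s w ^ 2) w) :
    timeDeriv H H =ᶠ[𝓝 z] fun w => -2 * K ^ 2 * ((1 + w) ^ 3 * s w) := by
  filter_upwards [hH.eventually_nhds, hs] with w hHw ⟨hsw, hsw'⟩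
  rw [timeDeriv, (hasDerivAt_of_eventuallyEq_mul_sq hHw hsw hsw').deriv, hHw.self_of_nhds]
  field_simp

theorem curvatureJ00_eq_zero_of_eventuallyEq_mul_sq (hH : ∀ᶠ w in 𝓝 z, H w = K * s w ^ 2)
    (hs : ∀ᶠ w in 𝓝 z, s w ≠ 0 ∧ HasDerivAt s ((1 + w) ^ 2 / s w ^ 2) w) :
    curvatureJ00 H z = 0 := by
  obtain ⟨hsz, hsz'⟩ := hs.self_of_nhds
  have hdot := timeDeriv_self_eventuallyEq hH hs
  have hdot' : HasDerivAt (fun w => -2 * K ^ 2 * ((1 + w) ^ 3 * s w))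
      (-2 * K ^ 2 * (3 * (1 + z) ^ 2 * s z + (1 + z) ^ 3 * ((1 + z) ^ 2 / s z ^ 2))) z := by
    have h1 : HasDerivAt (fun w : ℝ => (1 + w) ^ 3) (3 * (1 + z) ^ 2) z := by
      simpa using ((hasDerivAt_id' z).const_add 1).fun_pow 3
    refine ((h1.mul hsz').const_mul (-2 * K ^ 2)).congr_deriv ?_
    ring
  have hddot : timeDeriv H (timeDeriv H H) z = -(1 + z) * H z * deriv (timeDeriv H H) z := rfl
  rw [curvatureJ00, hddot, hdot.deriv_eq, hdot'.deriv,
    hdot.self_of_nhds, hH.self_of_nhds]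
  field_simp
  ring

end CubeRootSolution

section ShiftedCube

variable {a K z : ℝ}

theorem eventually_shifted_cube_pos (hz : 0 < a + (1 + z) ^ 3) :
    ∀ᶠ w in 𝓝 z, 0 < a + (1 + w) ^ 3 :=
  (by fun_prop : Continuous fun w : ℝ => a + (1 + w) ^ 3).continuousAt.eventually
    (lt_mem_nhds hz)

theorem hasDerivAt_cbrt_shifted_cube (hz : 0 < a + (1 + z) ^ 3) :
    HasDerivAt (fun w => (a + (1 + w) ^ 3) ^ (1 / 3 : ℝ))
      ((1 + z) ^ 2 / ((a + (1 + z) ^ 3) ^ (1 / 3 : ℝ)) ^ 2) z := by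
  have hu : HasDerivAt (fun w => a + (1 + w) ^ 3) (3 * (1 + z) ^ 2) z := by
    refine ((((hasDerivAt_id' z).const_add 1).fun_pow 3).const_add a).congr_deriv ?_
    norm_num
  refine (hu.rpow_one_third hz).congr_deriv ?_
  field_simp

theorem eventuallyEq_mul_cbrt_sq (hz : 0 < a + (1 + z) ^ 3) :
    (fun w => K * (a + (1 + w) ^ 3) ^ (2 / 3 : ℝ)) =ᶠ[𝓝 z]
      fun w => K * ((a + (1 + w) ^ 3) ^ (1 / 3 : ℝ)) ^ 2 := by
  filter_upwards [eventually_shifted_cube_pos hz] with w hw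
  rw [Real.rpow_two_thirds hw.le]

theorem eventually_cbrt_shifted_cube (hz : 0 < a + (1 + z) ^ 3) :
    ∀ᶠ w in 𝓝 z, (a + (1 + w) ^ 3) ^ (1 / 3 : ℝ) ≠ 0 ∧
      HasDerivAt (fun w => (a + (1 + w) ^ 3) ^ (1 / 3 : ℝ))
        ((1 + w) ^ 2 / ((a + (1 + w) ^ 3) ^ (1 / 3 : ℝ)) ^ 2) w := by
  filter_upwards [eventually_shifted_cube_pos hz] with w hw
  exact ⟨(Real.rpow_pos_of_pos hw _).ne', hasDerivAt_cbrt_shifted_cube hw⟩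

theorem hasDerivAt_mul_rpow_two_thirds (hz : 0 < a + (1 + z) ^ 3) :
    HasDerivAt (fun w => K * (a + (1 + w) ^ 3) ^ (2 / 3 : ℝ))
      (2 * K * (1 + z) ^ 2 / (a + (1 + z) ^ 3) ^ (1 / 3 : ℝ)) z :=
  hasDerivAt_of_eventuallyEq_mul_sq (eventuallyEq_mul_cbrt_sq hz)
    (Real.rpow_pos_of_pos hz _).ne' (hasDerivAt_cbrt_shifted_cube hz)

theorem curvatureJ00_mul_rpow_two_thirds (hz : 0 < a + (1 + z) ^ 3) :
    curvatureJ00 (fun w => K * (a + (1 + w) ^ 3) ^ (2 / 3 : ℝ)) z = 0 :=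
  curvatureJ00_eq_zero_of_eventuallyEq_mul_sq (eventuallyEq_mul_cbrt_sq hz)
    (eventually_cbrt_shifted_cube hz)

end ShiftedCube

theorem redshift_solution_initial_values {c d : ℝ} (hc : 0 < c) (hd : 0 < d) :
    c ^ (1 / 3 : ℝ) * d ^ (2 / 3 : ℝ) / 2 ^ (2 / 3 : ℝ) * (2 * c / d) ^ (2 / 3 : ℝ) = c ∧
      2 * (c ^ (1 / 3 : ℝ) * d ^ (2 / 3 : ℝ) / 2 ^ (2 / 3 : ℝ)) / (2 * c / d) ^ (1 / 3 : ℝ) = d := by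
  have cube : ∀ x : ℝ, 0 ≤ x → (x ^ (1 / 3 : ℝ)) ^ 3 = x := fun x hx => by
    simpa using Real.rpow_inv_natCast_pow hx (n := 3) (by norm_num)
  have hp := cube 2 (by norm_num)
  have hq := cube c hc.le
  have hr := cube d hd.le
  have hp0 : 0 < (2 : ℝ) ^ (1 / 3 : ℝ) := by positivity
  have hq0 : 0 < c ^ (1 / 3 : ℝ) := by positivity
  have hr0 : 0 < d ^ (1 / 3 : ℝ) := by positivity
  simp only [Real.rpow_two_thirds (by positivity : (0 : ℝ) ≤ 2 * c / d)]
  rw [Real.div_rpow (by positivity) hd.le, Real.mul_rpow zero_le_two hc.le,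
    Real.rpow_two_thirds hd.le, Real.rpow_two_thirds zero_le_two]
  set p := (2 : ℝ) ^ (1 / 3 : ℝ)
  set q := c ^ (1 / 3 : ℝ)
  set r := d ^ (1 / 3 : ℝ)
  constructor
  · field_simp
    linear_combination hq
  · field_simp
    linear_combination 2 * hr - d * hp

/-- The solution of `J₀₀ = 0` in redshift: `H(z) = c^{1/3} d^{2/3} (2c/d - 1 + (1+z)³)^{2/3}/2^{2/3}`
has the base positive for `z ≥ 0`, satisfies `H(0) = c`, `H'(0) = d`, and solves
`6Ḣ² - 12ḦH - 36ḢH² = 0` for all `z ≥ 0`, where `Ḣ = -(1+z)H H'` and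
`Ḧ = -(1+z)H (Ḣ)'`. -/
theorem stmt_15 (c d : ℝ) (hc : 0 < c) (hd : 0 < d) :
    let H : ℝ → ℝ := fun z =>
      c ^ ((1:ℝ)/3) * d ^ ((2:ℝ)/3) * (2*c/d - 1 + (1+z)^3) ^ ((2:ℝ)/3) / 2 ^ ((2:ℝ)/3)
    let Hdot : ℝ → ℝ := fun z => -(1+z) * H z * deriv H z
    let Hddot : ℝ → ℝ := fun z => -(1+z) * H z * deriv Hdot z
    (∀ z : ℝ, 0 ≤ z → 0 < 2*c/d - 1 + (1+z)^3) ∧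
    H 0 = c ∧ deriv H 0 = d ∧
    (∀ z : ℝ, 0 ≤ z →
      6 * Hdot z ^ 2 - 12 * Hddot z * H z - 36 * Hdot z * H z ^ 2 = 0) := by
  intro H Hdot Hddot
  set K := c ^ ((1:ℝ)/3) * d ^ ((2:ℝ)/3) / 2 ^ ((2:ℝ)/3)
  have hH : H = fun w => K * (2*c/d - 1 + (1+w)^3) ^ (2 / 3 : ℝ) := by
    funext w
    simp only [H, K]
    ring
  have hpos : ∀ z : ℝ, 0 ≤ z → 0 < 2*c/d - 1 + (1+z)^3 := fun z hz => by
    have : 1 ≤ (1 + z) ^ 3 := one_le_pow₀ (by linarith)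
    linarith [show 0 < 2 * c / d by positivity]
  have hpos0 := hpos 0 le_rfl
  obtain ⟨hH0, hH'0⟩ := redshift_solution_initial_values hc hd
  refine ⟨hpos, ?_, ?_, fun z hz => ?_⟩
  · rw [hH]
    convert hH0 using 3
    norm_num
  · rw [hH, (hasDerivAt_mul_rpow_two_thirds hpos0).deriv]
    norm_num
    exact hH'0
  · have hJ := curvatureJ00_mul_rpow_two_thirds (K := K) (hpos z hz)
    rw [← hH] at hJ
    exact hJ
end

section
/- Let c₁ ∈ ℝ and c₂ ∈ ℂ with c₁ > |c₂|. Then the set { c₁·(|λ|² + |μ|²) + 2·Re(c₂·λ·conj(μ)) : λ, μ ∈ ℂ with |λ|² − |μ|² = 1 } has least element √(c₁² − |c₂|²); that is, the minimum of this quadratic functional over the Bogoliubov constraint set exists and equals √(c₁² − |c₂|²). -/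
/-!
The functional is bounded below by `m (‖λ‖² - ‖μ‖²)` with `m = √(c₁² - ‖c₂‖²)`: since
`Re (c₂ λ μ̄) ≥ -‖c₂‖ ‖λ‖ ‖μ‖`, this reduces to the real quadratic form
`(c₁ - m) X² - 2 ‖c₂‖ X Y + (c₁ + m) Y²` being positive semidefinite, and its determinant
`c₁² - m² - ‖c₂‖²` vanishes. The bound is attained on the normalisation of `(c₁ + m, -c₂)`.
-/

open ComplexConjugate

noncomputable section

def bogoliubovEnergy (c₁ : ℝ) (c₂ l u : ℂ) : ℝ :=
  c₁ * (‖l‖ ^ 2 + ‖u‖ ^ 2) + 2 * (c₂ * l * conj u).re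

lemma Complex.neg_norm_mul_mul_le_re_mul_mul_conj (z l u : ℂ) :
    -(‖z‖ * ‖l‖ * ‖u‖) ≤ (z * l * conj u).re := by
  have h := Complex.abs_re_le_norm (z * l * conj u)
  rw [norm_mul, norm_mul, Complex.norm_conj] at h
  linarith [neg_abs_le (z * l * conj u).re]

lemma sqrt_sq_sub_sq_mul_sub_le {a c : ℝ} (ha : 0 ≤ a) (hac : a ≤ c) (X Y : ℝ) :
    √(c ^ 2 - a ^ 2) * (X ^ 2 - Y ^ 2) ≤ c * (X ^ 2 + Y ^ 2) - 2 * a * X * Y := by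
  set m := √(c ^ 2 - a ^ 2)
  have hm : m ^ 2 = c ^ 2 - a ^ 2 := Real.sq_sqrt (by nlinarith)
  have hm0 : 0 ≤ m := Real.sqrt_nonneg _
  -- As `(c - m) (c + m) = a²`, `(c + m)` times the form is `(a X - (c + m) Y)²`.
  have hform : 0 ≤ (c + m) * ((c - m) * X ^ 2 - 2 * a * X * Y + (c + m) * Y ^ 2) := by
    nlinarith [sq_nonneg (a * X - (c + m) * Y)]
  rcases (add_nonneg (ha.trans hac) hm0).eq_or_lt with hcm | hcm
  · have hc : c = 0 := by linarith [ha.trans hac]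
    have : m = 0 := by linarith
    simp [this, show a = 0 by linarith, hc]
  · nlinarith [nonneg_of_mul_nonneg_right hform hcm]

lemma sqrt_mul_sub_le_bogoliubovEnergy {c₁ : ℝ} {c₂ : ℂ} (h : ‖c₂‖ ≤ c₁) (l u : ℂ) :
    √(c₁ ^ 2 - ‖c₂‖ ^ 2) * (‖l‖ ^ 2 - ‖u‖ ^ 2) ≤ bogoliubovEnergy c₁ c₂ l u := by
  have := sqrt_sq_sub_sq_mul_sub_le (norm_nonneg c₂) h ‖l‖ ‖u‖
  have := Complex.neg_norm_mul_mul_le_re_mul_mul_conj c₂ l u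
  unfold bogoliubovEnergy
  nlinarith

lemma exists_bogoliubovEnergy_eq_sqrt {c₁ : ℝ} {c₂ : ℂ} (h : ‖c₂‖ < c₁) :
    ∃ l u : ℂ, ‖l‖ ^ 2 - ‖u‖ ^ 2 = 1 ∧ bogoliubovEnergy c₁ c₂ l u = √(c₁ ^ 2 - ‖c₂‖ ^ 2) := by
  set a := ‖c₂‖
  set m := √(c₁ ^ 2 - a ^ 2)
  have ha : 0 ≤ a := norm_nonneg c₂
  have hm : m ^ 2 = c₁ ^ 2 - a ^ 2 := Real.sq_sqrt (by nlinarith)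
  have hm0 : 0 < m := Real.sqrt_pos.mpr (by nlinarith)
  -- `(c₁ + m, -c₂)` has constraint value `2 m (c₁ + m)` and energy `m` times that.
  set N := √(2 * m * (c₁ + m))
  have hN : N ^ 2 = 2 * m * (c₁ + m) := Real.sq_sqrt (by nlinarith)
  have hN0 : 0 < N := Real.sqrt_pos.mpr (by nlinarith)
  have hl : ‖(((c₁ + m) / N : ℝ) : ℂ)‖ = (c₁ + m) / N := by
    rw [Complex.norm_real, Real.norm_of_nonneg (div_nonneg (by linarith) hN0.le)]
  have hu : ‖-(c₂ / (N : ℂ))‖ = a / N := by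
    rw [norm_neg, norm_div, Complex.norm_real, Real.norm_of_nonneg hN0.le]
  have hre : (c₂ * (((c₁ + m) / N : ℝ) : ℂ) * conj (-(c₂ / (N : ℂ)))).re
      = -((c₁ + m) * a ^ 2 / N ^ 2) := by
    have : c₂ * (((c₁ + m) / N : ℝ) : ℂ) * conj (-(c₂ / (N : ℂ)))
        = ((-((c₁ + m) * a ^ 2 / N ^ 2) : ℝ) : ℂ) := by
      rw [map_neg, map_div₀, Complex.conj_ofReal, show ∀ x y : ℂ,
        c₂ * x * -(conj c₂ / y) = -(x / y) * (c₂ * conj c₂) by intros; ring, Complex.mul_conj']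
      push_cast
      ring
    rw [this, Complex.ofReal_re]
  refine ⟨((c₁ + m) / N : ℝ), -(c₂ / (N : ℂ)), ?_, ?_⟩
  · rw [hl, hu, div_pow, div_pow, ← sub_div, div_eq_one_iff_eq (by positivity), hN]
    nlinarith
  · rw [bogoliubovEnergy, hl, hu, hre]
    field_simp
    nlinarith

end

/-- The minimisation defining states of low energy: for `c₁ > |c₂|`, the quadratic
functional `c₁(|λ|² + |μ|²) + 2 Re(c₂ λ μ̄)` on the Bogoliubov constraint set
`|λ|² - |μ|² = 1` attains the minimum value `√(c₁² - |c₂|²)`. -/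
theorem stmt_16 (c₁ : ℝ) (c₂ : ℂ) (h : ‖c₂‖ < c₁) :
    IsLeast {x : ℝ | ∃ l u : ℂ, ‖l‖ ^ 2 - ‖u‖ ^ 2 = 1 ∧
        x = c₁ * (‖l‖ ^ 2 + ‖u‖ ^ 2) +
          2 * (c₂ * l * (starRingEnd ℂ) u).re}
      (Real.sqrt (c₁ ^ 2 - ‖c₂‖ ^ 2)) := by
  obtain ⟨l, u, hlu, henergy⟩ := exists_bogoliubovEnergy_eq_sqrt h
  refine ⟨⟨l, u, hlu, henergy.symm⟩, ?_⟩
  rintro _ ⟨l, u, hlu, rfl⟩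
  simpa only [hlu, mul_one, bogoliubovEnergy] using sqrt_mul_sub_le_bogoliubovEnergy h.le l u
end
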